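/- Define F : ℝ³ × (ℝ \ {0}) → ℝ⁴ by F(x₁,x₂,x₃,t) = (x₁, t²x₂, t²x₃, t). For differentiable f, g : ℝ⁴ → ℝ (coordinates (X₁,X₂,X₃,X₄)) define {f,g}_can = ∂₄f·∂₁g − ∂₁f·∂₄g, and for differentiable u, v on ℝ³ × (ℝ \ {0}) define {u,v}_Π = (2x₂/t)(∂₁u·∂₂v − ∂₂u·∂₁v) + (2x₃/t)(∂₁u·∂₃v − ∂₃u·∂₁v) + (∂_t u·∂₁v − ∂₁u·∂_t v). Then for all differentiable f, g : ℝ⁴ → ℝ and all (x₁,x₂,x₃,t) with t ≠ 0: {f∘F, g∘F}_Π(x₁,x₂,x₃,t) = {f,g}_can(F(x₁,x₂,x₃,t)). -/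

import Mathlib

/-- Partial derivative in the first coordinate of `ℝ⁴`. -/
noncomputable def pd1 (u : ℝ × ℝ × ℝ × ℝ → ℝ) (P : ℝ × ℝ × ℝ × ℝ) : ℝ :=
  deriv (fun s => u (s, P.2.1, P.2.2.1, P.2.2.2)) P.1

/-- Partial derivative in the second coordinate of `ℝ⁴`. -/
noncomputable def pd2 (u : ℝ × ℝ × ℝ × ℝ → ℝ) (P : ℝ × ℝ × ℝ × ℝ) : ℝ :=
  deriv (fun s => u (P.1, s, P.2.2.1, P.2.2.2)) P.2.1

/-- Partial derivative in the third coordinate of `ℝ⁴`. -/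
noncomputable def pd3 (u : ℝ × ℝ × ℝ × ℝ → ℝ) (P : ℝ × ℝ × ℝ × ℝ) : ℝ :=
  deriv (fun s => u (P.1, P.2.1, s, P.2.2.2)) P.2.2.1

/-- Partial derivative in the fourth coordinate of `ℝ⁴`. -/
noncomputable def pd4 (u : ℝ × ℝ × ℝ × ℝ → ℝ) (P : ℝ × ℝ × ℝ × ℝ) : ℝ :=
  deriv (fun s => u (P.1, P.2.1, P.2.2.1, s)) P.2.2.2

/-- The constant Poisson bracket `{f,g} = ∂₄f·∂₁g − ∂₁f·∂₄g` on `ℝ⁴` with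
coordinates `(X₁,X₂,X₃,X₄)`. -/
noncomputable def canBr (f g : ℝ × ℝ × ℝ × ℝ → ℝ) (P : ℝ × ℝ × ℝ × ℝ) : ℝ :=
  pd4 f P * pd1 g P - pd1 f P * pd4 g P

/-- The Poissonization of the 3D linear Jacobi structure on coordinates
`(x₁,x₂,x₃,t)`, `t ≠ 0`. -/
noncomputable def piBr (u v : ℝ × ℝ × ℝ × ℝ → ℝ) (P : ℝ × ℝ × ℝ × ℝ) : ℝ :=
  (2 * P.2.1 / P.2.2.2) * (pd1 u P * pd2 v P - pd2 u P * pd1 v P)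
  + (2 * P.2.2.1 / P.2.2.2) * (pd1 u P * pd3 v P - pd3 u P * pd1 v P)
  + (pd4 u P * pd1 v P - pd1 u P * pd4 v P)

/-- `F(x₁,x₂,x₃,t) = (x₁, t²x₂, t²x₃, t)`. -/
def Fmap (P : ℝ × ℝ × ℝ × ℝ) : ℝ × ℝ × ℝ × ℝ :=
  (P.1, P.2.2.2 ^ 2 * P.2.1, P.2.2.2 ^ 2 * P.2.2.1, P.2.2.2)

lemma deriv_comp_curve (f : ℝ × ℝ × ℝ × ℝ → ℝ) (hf : Differentiable ℝ f)
    {γ : ℝ → ℝ × ℝ × ℝ × ℝ} {v : ℝ × ℝ × ℝ × ℝ} {s : ℝ} (hγ : HasDerivAt γ v s) :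
    deriv (fun s => f (γ s)) s = fderiv ℝ f (γ s) v :=
  ((hf (γ s)).hasFDerivAt.comp_hasDerivAt s hγ).deriv

lemma pd1_eq (f : ℝ × ℝ × ℝ × ℝ → ℝ) (hf : Differentiable ℝ f) (Q : ℝ × ℝ × ℝ × ℝ) :
    pd1 f Q = fderiv ℝ f Q (1,0,0,0) := by
  have hγ : HasDerivAt (fun s : ℝ => ((s, Q.2.1, Q.2.2.1, Q.2.2.2) : ℝ×ℝ×ℝ×ℝ))
      ((1:ℝ),(0:ℝ),(0:ℝ),(0:ℝ)) Q.1 :=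
    (hasDerivAt_id _).prodMk ((hasDerivAt_const _ _).prodMk
      ((hasDerivAt_const _ _).prodMk (hasDerivAt_const _ _)))
  exact deriv_comp_curve f hf hγ

lemma pd2_eq (f : ℝ × ℝ × ℝ × ℝ → ℝ) (hf : Differentiable ℝ f) (Q : ℝ × ℝ × ℝ × ℝ) :
    pd2 f Q = fderiv ℝ f Q (0,1,0,0) := by
  have hγ : HasDerivAt (fun s : ℝ => ((Q.1, s, Q.2.2.1, Q.2.2.2) : ℝ×ℝ×ℝ×ℝ))
      ((0:ℝ),(1:ℝ),(0:ℝ),(0:ℝ)) Q.2.1 :=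
    (hasDerivAt_const _ _).prodMk ((hasDerivAt_id _).prodMk
      ((hasDerivAt_const _ _).prodMk (hasDerivAt_const _ _)))
  exact deriv_comp_curve f hf hγ

lemma pd3_eq (f : ℝ × ℝ × ℝ × ℝ → ℝ) (hf : Differentiable ℝ f) (Q : ℝ × ℝ × ℝ × ℝ) :
    pd3 f Q = fderiv ℝ f Q (0,0,1,0) := by
  have hγ : HasDerivAt (fun s : ℝ => ((Q.1, Q.2.1, s, Q.2.2.2) : ℝ×ℝ×ℝ×ℝ))
      ((0:ℝ),(0:ℝ),(1:ℝ),(0:ℝ)) Q.2.2.1 :=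
    (hasDerivAt_const _ _).prodMk ((hasDerivAt_const _ _).prodMk
      ((hasDerivAt_id _).prodMk (hasDerivAt_const _ _)))
  exact deriv_comp_curve f hf hγ

lemma pd4_eq (f : ℝ × ℝ × ℝ × ℝ → ℝ) (hf : Differentiable ℝ f) (Q : ℝ × ℝ × ℝ × ℝ) :
    pd4 f Q = fderiv ℝ f Q (0,0,0,1) := by
  have hγ : HasDerivAt (fun s : ℝ => ((Q.1, Q.2.1, Q.2.2.1, s) : ℝ×ℝ×ℝ×ℝ))
      ((0:ℝ),(0:ℝ),(0:ℝ),(1:ℝ)) Q.2.2.2 :=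
    (hasDerivAt_const _ _).prodMk ((hasDerivAt_const _ _).prodMk
      ((hasDerivAt_const _ _).prodMk (hasDerivAt_id _)))
  exact deriv_comp_curve f hf hγ

lemma fderiv_apply_vec (f : ℝ × ℝ × ℝ × ℝ → ℝ) (hf : Differentiable ℝ f)
    (Q : ℝ × ℝ × ℝ × ℝ) (a b c d : ℝ) :
    fderiv ℝ f Q (a,b,c,d)
      = a * pd1 f Q + b * pd2 f Q + c * pd3 f Q + d * pd4 f Q := by
  have hv : ((a,b,c,d) : ℝ×ℝ×ℝ×ℝ)
      = a • ((1:ℝ),(0:ℝ),(0:ℝ),(0:ℝ)) + b • ((0:ℝ),(1:ℝ),(0:ℝ),(0:ℝ))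
        + c • ((0:ℝ),(0:ℝ),(1:ℝ),(0:ℝ)) + d • ((0:ℝ),(0:ℝ),(0:ℝ),(1:ℝ)) := by
    simp [Prod.ext_iff]
  rw [hv, map_add, map_add, map_add, map_smul, map_smul, map_smul, map_smul,
    pd1_eq f hf, pd2_eq f hf, pd3_eq f hf, pd4_eq f hf]
  simp [smul_eq_mul]

lemma pd1_comp (f : ℝ × ℝ × ℝ × ℝ → ℝ) (hf : Differentiable ℝ f) (x₁ x₂ x₃ t : ℝ) :
    pd1 (f ∘ Fmap) (x₁,x₂,x₃,t) = pd1 f (Fmap (x₁,x₂,x₃,t)) := by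
  have hγ : HasDerivAt (fun s : ℝ => ((s, t^2*x₂, t^2*x₃, t) : ℝ×ℝ×ℝ×ℝ))
      ((1:ℝ),(0:ℝ),(0:ℝ),(0:ℝ)) x₁ :=
    (hasDerivAt_id _).prodMk ((hasDerivAt_const _ _).prodMk
      ((hasDerivAt_const _ _).prodMk (hasDerivAt_const _ _)))
  have h := deriv_comp_curve f hf hγ
  have h2 := fderiv_apply_vec f hf (x₁, t^2*x₂, t^2*x₃, t) 1 0 0 0
  show deriv (fun s => f (s, t^2*x₂, t^2*x₃, t)) x₁ = _
  rw [h, h2]; ring_nf; rfl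

lemma pd2_comp (f : ℝ × ℝ × ℝ × ℝ → ℝ) (hf : Differentiable ℝ f) (x₁ x₂ x₃ t : ℝ) :
    pd2 (f ∘ Fmap) (x₁,x₂,x₃,t) = t^2 * pd2 f (Fmap (x₁,x₂,x₃,t)) := by
  have hγ : HasDerivAt (fun s : ℝ => ((x₁, t^2*s, t^2*x₃, t) : ℝ×ℝ×ℝ×ℝ))
      ((0:ℝ), t^2*1, (0:ℝ), (0:ℝ)) x₂ :=
    (hasDerivAt_const _ _).prodMk (((hasDerivAt_id _).const_mul _).prodMk
      ((hasDerivAt_const _ _).prodMk (hasDerivAt_const _ _)))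
  have h := deriv_comp_curve f hf hγ
  have h2 := fderiv_apply_vec f hf (x₁, t^2*x₂, t^2*x₃, t) 0 (t^2*1) 0 0
  show deriv (fun s => f (x₁, t^2*s, t^2*x₃, t)) x₂ = _
  rw [h, h2]; ring_nf; rfl

lemma pd3_comp (f : ℝ × ℝ × ℝ × ℝ → ℝ) (hf : Differentiable ℝ f) (x₁ x₂ x₃ t : ℝ) :
    pd3 (f ∘ Fmap) (x₁,x₂,x₃,t) = t^2 * pd3 f (Fmap (x₁,x₂,x₃,t)) := by
  have hγ : HasDerivAt (fun s : ℝ => ((x₁, t^2*x₂, t^2*s, t) : ℝ×ℝ×ℝ×ℝ))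
      ((0:ℝ), (0:ℝ), t^2*1, (0:ℝ)) x₃ :=
    (hasDerivAt_const _ _).prodMk ((hasDerivAt_const _ _).prodMk
      (((hasDerivAt_id _).const_mul _).prodMk (hasDerivAt_const _ _)))
  have h := deriv_comp_curve f hf hγ
  have h2 := fderiv_apply_vec f hf (x₁, t^2*x₂, t^2*x₃, t) 0 0 (t^2*1) 0
  show deriv (fun s => f (x₁, t^2*x₂, t^2*s, t)) x₃ = _
  rw [h, h2]; ring_nf; rfl

lemma pd4_comp (f : ℝ × ℝ × ℝ × ℝ → ℝ) (hf : Differentiable ℝ f) (x₁ x₂ x₃ t : ℝ) :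
    pd4 (f ∘ Fmap) (x₁,x₂,x₃,t)
      = 2*t*x₂ * pd2 f (Fmap (x₁,x₂,x₃,t)) + 2*t*x₃ * pd3 f (Fmap (x₁,x₂,x₃,t))
        + pd4 f (Fmap (x₁,x₂,x₃,t)) := by
  have hγ : HasDerivAt (fun s : ℝ => ((x₁, s^2*x₂, s^2*x₃, s) : ℝ×ℝ×ℝ×ℝ))
      ((0:ℝ), (↑2 * t^1)*x₂, (↑2 * t^1)*x₃, (1:ℝ)) t :=
    (hasDerivAt_const _ _).prodMk (((hasDerivAt_pow 2 t).mul_const _).prodMk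
      (((hasDerivAt_pow 2 t).mul_const _).prodMk (hasDerivAt_id _)))
  have h := deriv_comp_curve f hf hγ
  have h2 := fderiv_apply_vec f hf (x₁, t^2*x₂, t^2*x₃, t) 0 ((2*t^1)*x₂) ((2*t^1)*x₃) 1
  show deriv (fun s => f (x₁, s^2*x₂, s^2*x₃, s)) t = _
  rw [h]
  rw [h2]
  have : Fmap (x₁,x₂,x₃,t) = (x₁, t^2*x₂, t^2*x₃, t) := rfl
  rw [this]; ring

/-- `F` is a Poisson map from the Poissonized 3D linear Jacobi structure onto
the constant Poisson structure `∂_{X₄} ∧ ∂_{X₁}` on `ℝ⁴`. -/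
theorem stmt_12 (f g : ℝ × ℝ × ℝ × ℝ → ℝ)
    (hf : Differentiable ℝ f) (hg : Differentiable ℝ g) :
    ∀ x₁ x₂ x₃ t : ℝ, t ≠ 0 →
      piBr (f ∘ Fmap) (g ∘ Fmap) (x₁, x₂, x₃, t) = canBr f g (Fmap (x₁, x₂, x₃, t)) := by
  intro x₁ x₂ x₃ t ht
  unfold piBr canBr
  rw [pd1_comp f hf, pd1_comp g hg, pd2_comp f hf, pd2_comp g hg,
    pd3_comp f hf, pd3_comp g hg, pd4_comp f hf, pd4_comp g hg]
  field_simp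
  ring
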